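/- arXiv:2411.10658 — 2 statements merged into one kernel-verified Lean document; each statement's English description precedes it below -/
import Mathlib

section
/- Let Γ and h be symmetric positive definite n×n matrices and let ρ = ρ((Γ+h)⁻¹Γ) < 1 be the spectral radius. Then for every k, the matrix I − ((Γ+h)⁻¹Γ)^{k+1} is invertible, and its inverse has operator norm bounded by 1/(1 − κ ρ^{k+1}) whenever κ ρ^{k+1} < 1, where κ = ‖C⁻¹‖‖C‖ for C with Γ = CᵀC. -/
open Matrix

/-- The operator 2-norm of a real square matrix. -/
noncomputable def opNorm {n : ℕ} (A : Matrix (Fin n) (Fin n) ℝ) : ℝ :=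
  ‖Matrix.toEuclideanCLM (𝕜 := ℝ) A‖

lemma map_ringInverse {F R S : Type*} [Ring R] [Ring S] [EquivLike F R S]
    [RingEquivClass F R S] (f : F) (a : R) :
    f (Ring.inverse a) = Ring.inverse (f a) := by
  by_cases h : IsUnit a
  · have h' : IsUnit (f a) := h.map (f : R →+* S)
    calc f (Ring.inverse a)
        = f (Ring.inverse a) * (f a * Ring.inverse (f a)) := by
          rw [Ring.mul_inverse_cancel _ h', mul_one]
      _ = (f (Ring.inverse a) * f a) * Ring.inverse (f a) := by rw [mul_assoc]
      _ = Ring.inverse (f a) := by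
          rw [← _root_.map_mul, Ring.inverse_mul_cancel _ h, _root_.map_one, one_mul]
  · rw [Ring.inverse_non_unit _ h, Ring.inverse_non_unit, map_zero]
    intro hc
    apply h
    have := hc.map (RingEquivClass.toRingEquiv f).symm
    simpa using this

lemma opNorm_diagonal_le {n : ℕ} {d : Fin n → ℝ} {r : ℝ} (hr : 0 ≤ r) (hd : ∀ i, |d i| ≤ r) :
    ‖toEuclideanCLM (𝕜 := ℝ) (Matrix.diagonal d)‖ ≤ r := by
  refine ContinuousLinearMap.opNorm_le_bound _ hr fun x => ?_
  have hap : ∀ i, (toEuclideanCLM (𝕜 := ℝ) (Matrix.diagonal d)) x i = d i * x i := by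
    intro i
    have := congrFun (ofLp_toEuclideanCLM (𝕜 := ℝ) (Matrix.diagonal d) x) i
    simpa [Matrix.toLin'_apply, Matrix.mulVec_diagonal] using this
  rw [EuclideanSpace.norm_eq, EuclideanSpace.norm_eq, ← Real.sqrt_sq hr,
    ← Real.sqrt_mul (sq_nonneg r), Finset.mul_sum]
  apply Real.sqrt_le_sqrt
  apply Finset.sum_le_sum
  intro i _
  rw [hap i]
  have : ‖d i * x i‖ ≤ r * ‖x i‖ := by
    rw [norm_mul]
    exact mul_le_mul_of_nonneg_right (by simpa using hd i) (norm_nonneg _)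
  calc ‖d i * x i‖ ^ 2 ≤ (r * ‖x i‖) ^ 2 := by
        apply pow_le_pow_left₀ (norm_nonneg _) this
    _ = r ^ 2 * ‖x i‖ ^ 2 := by ring

set_option maxHeartbeats 1000000 in
set_option synthInstance.maxHeartbeats 400000 in
/-- Let `G` (= Γ) and `h` be symmetric positive definite `n × n` matrices and let
`r ≥ ρ((G+h)⁻¹G)` with `r < 1` (all eigenvalues of `(G+h)⁻¹G` are bounded by `r` in modulus).
Then for every `k` the matrix `I − ((G+h)⁻¹G)^{k+1}` is invertible, and whenever
`κ r^{k+1} < 1` with `κ = ‖C⁻¹‖‖C‖` for `C` with `G = CᵀC`, the operator norm of its inverse is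
bounded by `1/(1 − κ r^{k+1})`. -/
theorem inverse_of_one_sub_pow_bound {n : ℕ}
    (G h C : Matrix (Fin n) (Fin n) ℝ) (r : ℝ)
    (hG : G.PosDef) (hh : h.PosDef) (hC : IsUnit C) (hfact : G = Cᵀ * C)
    (hspec : ∀ μ ∈ spectrum ℝ ((G + h)⁻¹ * G), |μ| ≤ r) (hr : r < 1) :
    ∀ k : ℕ,
      IsUnit (1 - ((G + h)⁻¹ * G) ^ (k + 1)) ∧
      (opNorm C⁻¹ * opNorm C * r ^ (k + 1) < 1 →
        opNorm ((1 - ((G + h)⁻¹ * G) ^ (k + 1))⁻¹) ≤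
          1 / (1 - opNorm C⁻¹ * opNorm C * r ^ (k + 1))) := by
  intro k
  rcases Nat.eq_zero_or_pos n with hn | hn
  · subst hn
    have hz : ∀ A : Matrix (Fin 0) (Fin 0) ℝ, opNorm A = 0 := fun A => by
      rw [opNorm, Subsingleton.elim (toEuclideanCLM (𝕜 := ℝ) A) 0, norm_zero]
    refine ⟨isUnit_of_subsingleton _, fun _ => ?_⟩
    simp [hz]
  -- main case
  haveI : Nonempty (Fin n) := ⟨⟨0, hn⟩⟩
  haveI : Nontrivial (EuclideanSpace ℝ (Fin n)) := by
    refine ⟨(WithLp.equiv _ _).symm 0, (WithLp.equiv _ _).symm 1, fun hcon => ?_⟩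
    have := congrFun ((WithLp.equiv _ _).symm.injective hcon) ⟨0, hn⟩
    norm_num at this
  set φ := (toEuclideanCLM (𝕜 := ℝ) (n := Fin n)) with hφdef
  have hdetC : IsUnit C.det := (Matrix.isUnit_iff_isUnit_det C).mp hC
  have hCC : C⁻¹ * C = 1 := Matrix.nonsing_inv_mul C hdetC
  have hCC' : C * C⁻¹ = 1 := Matrix.mul_nonsing_inv C hdetC
  obtain ⟨u, hu⟩ := hC
  have hCinv_eq : C⁻¹ = ↑u⁻¹ := by rw [← hu, ← Matrix.coe_units_inv]
  have hCinv : IsUnit C⁻¹ := hCinv_eq ▸ u⁻¹.isUnit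
  set M := (G + h)⁻¹ * G with hM
  set S := C * M * C⁻¹ with hS
  have hGh : (G + h).PosDef := hG.add_posSemidef hh.posSemidef
  have hSsym : S.IsHermitian := by
    have hG2 : (G + h)⁻¹ * G = (G + h)⁻¹ * (Cᵀ * C) := by rw [← hfact]
    have h1 : S = C * (G + h)⁻¹ * Cᵀ := by
      rw [hS, hM, hG2]
      calc C * ((G + h)⁻¹ * (Cᵀ * C)) * C⁻¹
          = C * (G + h)⁻¹ * Cᵀ * (C * C⁻¹) := by simp only [Matrix.mul_assoc]
        _ = C * (G + h)⁻¹ * Cᵀ := by rw [hCC', Matrix.mul_one]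
    have hinv : ((G + h)⁻¹).IsHermitian := hGh.1.inv
    rw [Matrix.IsHermitian, h1]
    simp only [Matrix.conjTranspose_mul, Matrix.conjTranspose_eq_transpose_of_trivial,
      Matrix.transpose_mul, Matrix.transpose_transpose]
    rw [← Matrix.conjTranspose_eq_transpose_of_trivial (G + h)⁻¹, hinv.eq]
    simp only [Matrix.mul_assoc]
  -- spectrum of S equals spectrum of M
  have hspecS : spectrum ℝ S = spectrum ℝ M := by
    rw [hS, hCinv_eq, ← hu]
    exact spectrum.units_conjugate
  have heig : ∀ i, |hSsym.eigenvalues i| ≤ r := fun i => by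
    have := hSsym.eigenvalues_mem_spectrum_real i
    rw [hspecS] at this
    exact hspec _ this
  have hr0 : 0 ≤ r := le_trans (abs_nonneg _) (heig ⟨0, hn⟩)
  -- norm of S
  set V := (Matrix.IsHermitian.eigenvectorUnitary hSsym : Matrix (Fin n) (Fin n) ℝ) with hV
  have hVmem : V ∈ unitary (Matrix (Fin n) (Fin n) ℝ) :=
    (Matrix.IsHermitian.eigenvectorUnitary hSsym).2
  have hφVmem : φ V ∈ unitary (EuclideanSpace ℝ (Fin n) →L[ℝ] EuclideanSpace ℝ (Fin n)) := by
    rw [Unitary.mem_iff] at hVmem ⊢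
    constructor
    · rw [← map_star, ← _root_.map_mul, hVmem.1, _root_.map_one]
    · rw [← map_star, ← _root_.map_mul, hVmem.2, _root_.map_one]
  have hnormV : ‖φ V‖ = 1 := CStarRing.norm_of_mem_unitary hφVmem
  have hSnorm : ‖φ S‖ ≤ r := by
    have hst := hSsym.spectral_theorem
    rw [Unitary.conjStarAlgAut_apply] at hst
    have hD : ‖φ (Matrix.diagonal (RCLike.ofReal ∘ hSsym.eigenvalues))‖ ≤ r := by
      apply opNorm_diagonal_le hr0
      intro i
      simpa using heig i
    have hsV : ‖φ (star V)‖ = 1 := by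
      rw [map_star]
      exact CStarRing.norm_of_mem_unitary (Unitary.star_mem hφVmem)
    calc ‖φ S‖ = ‖φ V * φ (Matrix.diagonal (RCLike.ofReal ∘ hSsym.eigenvalues)) * φ (star V)‖ := by
          rw [← _root_.map_mul, ← _root_.map_mul, ← hst]
      _ ≤ ‖φ V * φ (Matrix.diagonal (RCLike.ofReal ∘ hSsym.eigenvalues))‖ * ‖φ (star V)‖ :=
          norm_mul_le _ _
      _ ≤ ‖φ V‖ * ‖φ (Matrix.diagonal (RCLike.ofReal ∘ hSsym.eigenvalues))‖ * ‖φ (star V)‖ :=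
          mul_le_mul_of_nonneg_right (norm_mul_le _ _) (norm_nonneg _)
      _ ≤ 1 * r * 1 := by
          rw [hnormV, hsV]
          exact mul_le_mul_of_nonneg_right (mul_le_mul_of_nonneg_left hD zero_le_one) zero_le_one
      _ = r := by ring
  -- powers
  have hSpow : ‖φ (S ^ (k + 1))‖ ≤ r ^ (k + 1) := by
    rw [map_pow]
    exact le_trans (norm_pow_le' _ k.succ_pos) (pow_le_pow_left₀ (norm_nonneg _) hSnorm _)
  have hrpow : r ^ (k + 1) < 1 := pow_lt_one₀ hr0 hr k.succ_ne_zero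
  have hSpow1 : ‖φ (S ^ (k + 1))‖ < 1 := lt_of_le_of_lt hSpow hrpow
  have hunitS : IsUnit (1 - S ^ (k + 1)) := by
    have h1 : IsUnit (1 - φ (S ^ (k + 1))) := isUnit_one_sub_of_norm_lt_one hSpow1
    have h2 := h1.map (toEuclideanCLM (𝕜 := ℝ) (n := Fin n)).symm
    simpa only [hφdef, map_sub, _root_.map_one, StarAlgEquiv.symm_apply_apply] using h2
  have hMS : M ^ (k + 1) = C⁻¹ * S ^ (k + 1) * C := by
    have h1 : S ^ (k + 1) = C * M ^ (k + 1) * C⁻¹ := by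
      rw [hS, hCinv_eq, ← hu, Units.conj_pow, hu, ← hCinv_eq]
    rw [h1]
    symm
    calc C⁻¹ * (C * M ^ (k + 1) * C⁻¹) * C
        = (C⁻¹ * C) * M ^ (k + 1) * (C⁻¹ * C) := by simp only [Matrix.mul_assoc]
      _ = M ^ (k + 1) := by rw [hCC, Matrix.one_mul, Matrix.mul_one]
  have hkey : 1 - M ^ (k + 1) = C⁻¹ * (1 - S ^ (k + 1)) * C := by
    rw [Matrix.mul_sub, Matrix.sub_mul, hMS, Matrix.mul_one, hCC]
  have hunitM : IsUnit (1 - M ^ (k + 1)) := by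
    rw [hkey]
    exact (hCinv.mul hunitS).mul ⟨u, hu⟩
  refine ⟨hunitM, fun hκ => ?_⟩
  -- the norm bound
  set c := opNorm C⁻¹ * opNorm C * r ^ (k + 1) with hc
  have hMnorm : ‖φ (M ^ (k + 1))‖ ≤ c := by
    rw [hMS, _root_.map_mul, _root_.map_mul]
    calc ‖φ C⁻¹ * φ (S ^ (k + 1)) * φ C‖ ≤ ‖φ C⁻¹ * φ (S ^ (k + 1))‖ * ‖φ C‖ := norm_mul_le _ _
      _ ≤ ‖φ C⁻¹‖ * ‖φ (S ^ (k + 1))‖ * ‖φ C‖ :=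
          mul_le_mul_of_nonneg_right (norm_mul_le _ _) (norm_nonneg _)
      _ ≤ ‖φ C⁻¹‖ * r ^ (k + 1) * ‖φ C‖ := by
          apply mul_le_mul_of_nonneg_right _ (norm_nonneg _)
          exact mul_le_mul_of_nonneg_left hSpow (norm_nonneg _)
      _ = c := by rw [hc, opNorm, opNorm]; ring
  have hM1 : ‖φ (M ^ (k + 1))‖ < 1 := lt_of_le_of_lt hMnorm hκ
  have hφinv : φ ((1 - M ^ (k + 1))⁻¹) = Ring.inverse (1 - φ (M ^ (k + 1))) := by
    rw [Matrix.nonsing_inv_eq_ringInverse, map_ringInverse φ, map_sub, _root_.map_one]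
  rw [opNorm, hφinv, NormedRing.inverse_one_sub _ hM1]
  have hone : ‖(1 : EuclideanSpace ℝ (Fin n) →L[ℝ] EuclideanSpace ℝ (Fin n))‖ = 1 := by
    rw [ContinuousLinearMap.one_def]
    exact ContinuousLinearMap.norm_id
  have hgeom : ‖(↑(Units.oneSub (φ (M ^ (k + 1))) hM1)⁻¹ :
      EuclideanSpace ℝ (Fin n) →L[ℝ] EuclideanSpace ℝ (Fin n))‖
      ≤ (1 - ‖φ (M ^ (k + 1))‖)⁻¹ := by
    have h2 := tsum_geometric_le_of_norm_lt_one (φ (M ^ (k + 1))) hM1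
    rw [hone] at h2
    calc ‖(↑(Units.oneSub (φ (M ^ (k + 1))) hM1)⁻¹ :
        EuclideanSpace ℝ (Fin n) →L[ℝ] EuclideanSpace ℝ (Fin n))‖
        = ‖∑' m : ℕ, (φ (M ^ (k + 1))) ^ m‖ := rfl
      _ ≤ 1 - 1 + (1 - ‖φ (M ^ (k + 1))‖)⁻¹ := h2
      _ = (1 - ‖φ (M ^ (k + 1))‖)⁻¹ := by ring
  refine le_trans hgeom ?_
  rw [one_div]
  have hc1 : 0 < 1 - c := by linarith
  apply inv_anti₀ hc1
  linarith [hMnorm]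
end

section
/- Let h be a symmetric matrix with m₁ I ⪯ h ⪯ m₂ I, 0 < m₁ ≤ m₂, and 0 < η < 2/m₂. Then for any g ∈ ℝⁿ, the sequence y(k+1) = y(k) − [I − (I − η h)^{k+1}] h⁻¹ g converges, and if g = h(y(0) − x*) for some x* (quadratic objective case with constant Hessian h and gradient g(y) = h(y − x*)), then with the full update y(k+1) = y(k) − [I − (I−ηh)^{k+1}] h⁻¹ h (y(k) − x*), one has y(k+1) − x* = (I − η h)^{k+1}(y(k) − x*), hence ‖y(k+1) − x*‖ ≤ c^{k+1}‖y(k) − x*‖ with c = ‖I − ηh‖ < 1. -/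
open Matrix

/-- The Euclidean norm of a vector in `ℝⁿ`. -/
noncomputable def evNorm {n : ℕ} (v : Fin n → ℝ) : ℝ :=
  ‖(WithLp.equiv 2 (Fin n → ℝ)).symm v‖

lemma evNorm_nonneg {n : ℕ} (v : Fin n → ℝ) : 0 ≤ evNorm v := norm_nonneg _

lemma evNorm_mulVec_le {n : ℕ} (A : Matrix (Fin n) (Fin n) ℝ) (v : Fin n → ℝ) :
    evNorm (A.mulVec v) ≤ opNorm A * evNorm v := by
  rw [evNorm, evNorm, opNorm]
  have : (WithLp.equiv 2 (Fin n → ℝ)).symm (A *ᵥ v) =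
      Matrix.toEuclideanCLM (𝕜 := ℝ) A ((WithLp.equiv 2 (Fin n → ℝ)).symm v) := rfl
  rw [this]
  exact (Matrix.toEuclideanCLM (𝕜 := ℝ) A).le_opNorm _

lemma opNorm_pow_le {n : ℕ} (A : Matrix (Fin n) (Fin n) ℝ) (k : ℕ) (hk : k ≠ 0) :
    opNorm (A ^ k) ≤ opNorm A ^ k := by
  rw [opNorm, opNorm, map_pow]
  exact norm_pow_le' _ (Nat.pos_of_ne_zero hk)

/-- Eigenvalue bounds from the semidefinite sandwich. -/
lemma eig_bounds {n : ℕ} {h : Matrix (Fin n) (Fin n) ℝ} {m₁ m₂ : ℝ}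
    (hsymm : h.IsHermitian)
    (hlow : (h - m₁ • (1 : Matrix (Fin n) (Fin n) ℝ)).PosSemidef)
    (hup : (m₂ • (1 : Matrix (Fin n) (Fin n) ℝ) - h).PosSemidef) (i : Fin n) :
    m₁ ≤ hsymm.eigenvalues i ∧ hsymm.eigenvalues i ≤ m₂ := by
  set v : Fin n → ℝ := ⇑(hsymm.eigenvectorBasis i) with hv
  have hvv : v ⬝ᵥ v = 1 := by
    have h1 : ‖hsymm.eigenvectorBasis i‖ = 1 := hsymm.eigenvectorBasis.orthonormal.1 i
    have h2 : (inner ℝ (hsymm.eigenvectorBasis i) (hsymm.eigenvectorBasis i) : ℝ) = 1 := by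
      rw [real_inner_self_eq_norm_mul_norm, h1]; ring
    rw [← h2, PiLp.inner_apply]
    rfl
  have hmul : h *ᵥ v = hsymm.eigenvalues i • v := hsymm.mulVec_eigenvectorBasis i
  constructor
  · have := hlow.dotProduct_mulVec_nonneg v
    rw [sub_mulVec, hmul, smul_mulVec, one_mulVec, star_trivial, ← sub_smul,
      dotProduct_smul, smul_eq_mul, hvv, mul_one] at this
    linarith
  · have := hup.dotProduct_mulVec_nonneg v
    rw [sub_mulVec, hmul, smul_mulVec, one_mulVec, star_trivial, ← sub_smul,
      dotProduct_smul, smul_eq_mul, hvv, mul_one] at this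
    linarith

/-- Operator norm bound for `1 - η • h` from bounds on the eigenvalues. -/
lemma opNorm_one_sub_smul_le {n : ℕ} {h : Matrix (Fin n) (Fin n) ℝ}
    (hsymm : h.IsHermitian) {η r : ℝ} (hr : 0 ≤ r)
    (hev : ∀ i, |1 - η * hsymm.eigenvalues i| ≤ r) :
    opNorm (1 - η • h) ≤ r := by
  set A : Matrix (Fin n) (Fin n) ℝ := 1 - η • h with hA
  have hAh : A.IsHermitian := by
    rw [Matrix.IsHermitian, hA, Matrix.conjTranspose_sub, Matrix.conjTranspose_one,
      Matrix.conjTranspose_smul, star_trivial, hsymm.eq]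
  set b := hsymm.eigenvectorBasis with hb
  set ev := hsymm.eigenvalues with hev'
  set T := Matrix.toEuclideanCLM (𝕜 := ℝ) A with hT
  have hsymT : (Matrix.toEuclideanLin A).IsSymmetric :=
    Matrix.isHermitian_iff_isSymmetric.1 hAh
  have hTapply : ∀ x : EuclideanSpace ℝ (Fin n), T x = Matrix.toEuclideanLin A x := by
    intro x
    have := Matrix.coe_toEuclideanCLM_eq_toEuclideanLin (n := Fin n) (𝕜 := ℝ) A
    exact DFunLike.congr_fun this x
  have hTb : ∀ i, T (b i) = (1 - η * ev i) • b i := by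
    intro i
    have hmv : A *ᵥ ⇑(b i) = (1 - η * ev i) • ⇑(b i) := by
      rw [hA, sub_mulVec, one_mulVec, smul_mulVec, hsymm.mulVec_eigenvectorBasis]
      module
    rw [hTapply, Matrix.toEuclideanLin_apply]
    exact congrArg (WithLp.equiv 2 (Fin n → ℝ)).symm hmv
  apply ContinuousLinearMap.opNorm_le_bound _ hr
  intro x
  have hrepr : ∀ i, b.repr (T x) i = (1 - η * ev i) * b.repr x i := by
    intro i
    rw [b.repr_apply_apply, b.repr_apply_apply]
    have hsy : (inner ℝ (b i) (T x) : ℝ) = inner ℝ (T (b i)) x := by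
      rw [hTapply, hTapply]
      exact (hsymT (b i) x).symm
    rw [hsy, hTb i, real_inner_smul_left]
  calc ‖T x‖ = ‖b.repr (T x)‖ := (b.repr.norm_map _).symm
    _ = Real.sqrt (∑ i, ‖b.repr (T x) i‖ ^ 2) := EuclideanSpace.norm_eq _
    _ ≤ Real.sqrt (∑ i, (r * ‖b.repr x i‖) ^ 2) := by
        apply Real.sqrt_le_sqrt
        apply Finset.sum_le_sum
        intro i _
        apply pow_le_pow_left₀ (norm_nonneg _)
        rw [hrepr i, norm_mul, Real.norm_eq_abs (1 - η * ev i)]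
        exact mul_le_mul_of_nonneg_right (hev i) (norm_nonneg _)
    _ = r * Real.sqrt (∑ i, ‖b.repr x i‖ ^ 2) := by
        simp_rw [mul_pow, ← Finset.mul_sum]
        rw [Real.sqrt_mul (sq_nonneg r), Real.sqrt_sq hr]
    _ = r * ‖b.repr x‖ := by rw [EuclideanSpace.norm_eq]
    _ = r * ‖x‖ := by rw [b.repr.norm_map]

/-- quadratic case: let `h` be symmetric with `m₁ I ⪯ h ⪯ m₂ I`,
`0 < m₁ ≤ m₂`, `0 < η < 2/m₂`, so that `c = ‖I − ηh‖ < 1`. For the quadratic objective with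
constant Hessian `h` and gradient `g(y) = h(y − x*)`, the iteration
`y(k+1) = y(k) − [I − (I−ηh)^{k+1}] h⁻¹ h (y(k) − x*)` satisfies
`y(k+1) − x* = (I−ηh)^{k+1}(y(k) − x*)`, hence `‖y(k+1) − x*‖ ≤ c^{k+1} ‖y(k) − x*‖`,
and `y(k)` converges to `x*`. -/
theorem quadratic_case_superlinear {n : ℕ}
    (h : Matrix (Fin n) (Fin n) ℝ) (m₁ m₂ η c : ℝ)
    (hsymm : h.IsHermitian) (hm₁ : 0 < m₁) (hm : m₁ ≤ m₂)
    (hlow : (h - m₁ • (1 : Matrix (Fin n) (Fin n) ℝ)).PosSemidef)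
    (hup : (m₂ • (1 : Matrix (Fin n) (Fin n) ℝ) - h).PosSemidef)
    (hη0 : 0 < η) (hη : η < 2 / m₂)
    (hc : c = opNorm (1 - η • h))
    (y : ℕ → Fin n → ℝ) (xs : Fin n → ℝ)
    (hiter : ∀ k : ℕ, y (k + 1) =
      y k - (1 - (1 - η • h) ^ (k + 1)).mulVec (h⁻¹.mulVec (h.mulVec (y k - xs)))) :
    c < 1 ∧
    (∀ k : ℕ, y (k + 1) - xs = ((1 - η • h) ^ (k + 1)).mulVec (y k - xs)) ∧
    (∀ k : ℕ, evNorm (y (k + 1) - xs) ≤ c ^ (k + 1) * evNorm (y k - xs)) ∧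
    Filter.Tendsto (fun k : ℕ => y k) Filter.atTop (nhds xs) := by
  have hm₂0 : 0 < m₂ := lt_of_lt_of_le hm₁ hm
  have hηm₂ : η * m₂ < 2 := by
    have := (lt_div_iff₀ hm₂0).1 hη
    linarith
  -- the contraction factor bound
  set r : ℝ := max (1 - η * m₁) (η * m₂ - 1) with hrdef
  have hr0 : 0 ≤ r := by
    rcases le_total (η * m₁) 1 with h' | h'
    · exact le_max_of_le_left (by linarith)
    · refine le_max_of_le_right ?_
      nlinarith
  have hr1 : r < 1 := by
    apply max_lt
    · nlinarith
    · linarith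
  have hcle : c ≤ r := by
    rw [hc]
    apply opNorm_one_sub_smul_le hsymm hr0
    intro i
    obtain ⟨h1, h2⟩ := eig_bounds hsymm hlow hup i
    have e1 : η * hsymm.eigenvalues i ≤ η * m₂ := mul_le_mul_of_nonneg_left h2 hη0.le
    have e2 : η * m₁ ≤ η * hsymm.eigenvalues i := mul_le_mul_of_nonneg_left h1 hη0.le
    have e3 : 1 - η * m₁ ≤ r := le_max_left _ _
    have e4 : η * m₂ - 1 ≤ r := le_max_right _ _
    rw [abs_le]
    constructor <;> linarith
  have hc1 : c < 1 := lt_of_le_of_lt hcle hr1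
  have hc0 : 0 ≤ c := hc ▸ norm_nonneg _
  -- invertibility of h
  have hPD : h.PosDef := by
    have hsm : (m₁ • (1 : Matrix (Fin n) (Fin n) ℝ)).PosDef := by
      rw [Matrix.smul_one_eq_diagonal]
      exact Matrix.PosDef.diagonal fun _ => hm₁
    have := Matrix.PosDef.posSemidef_add hlow hsm
    rwa [sub_add_cancel] at this
  have hinv : h⁻¹ * h = 1 :=
    Matrix.nonsing_inv_mul h ((Matrix.isUnit_iff_isUnit_det _).1 hPD.isUnit)
  -- part 2: iterate identity
  have key : ∀ k : ℕ, y (k + 1) - xs = ((1 - η • h) ^ (k + 1)).mulVec (y k - xs) := by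
    intro k
    have hv : h⁻¹.mulVec (h.mulVec (y k - xs)) = y k - xs := by
      rw [Matrix.mulVec_mulVec, hinv, Matrix.one_mulVec]
    rw [hiter k, hv, Matrix.sub_mulVec, Matrix.one_mulVec]
    abel
  -- part 3: norm bound
  have key3 : ∀ k : ℕ, evNorm (y (k + 1) - xs) ≤ c ^ (k + 1) * evNorm (y k - xs) := by
    intro k
    rw [key k]
    calc evNorm (((1 - η • h) ^ (k + 1)).mulVec (y k - xs))
        ≤ opNorm ((1 - η • h) ^ (k + 1)) * evNorm (y k - xs) := evNorm_mulVec_le _ _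
      _ ≤ c ^ (k + 1) * evNorm (y k - xs) := by
          apply mul_le_mul_of_nonneg_right _ (evNorm_nonneg _)
          rw [hc]
          exact opNorm_pow_le _ _ (Nat.succ_ne_zero k)
  refine ⟨hc1, key, key3, ?_⟩
  -- part 4: convergence
  have hstep : ∀ k : ℕ, evNorm (y (k + 1) - xs) ≤ c * evNorm (y k - xs) := by
    intro k
    refine (key3 k).trans (mul_le_mul_of_nonneg_right ?_ (evNorm_nonneg _))
    exact pow_le_of_le_one hc0 hc1.le (Nat.succ_ne_zero k)
  have hgeo : ∀ k : ℕ, evNorm (y k - xs) ≤ c ^ k * evNorm (y 0 - xs) := by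
    intro k
    induction k with
    | zero => simp
    | succ k ih =>
      calc evNorm (y (k + 1) - xs) ≤ c * evNorm (y k - xs) := hstep k
        _ ≤ c * (c ^ k * evNorm (y 0 - xs)) := mul_le_mul_of_nonneg_left ih hc0
        _ = c ^ (k + 1) * evNorm (y 0 - xs) := by ring
  have htend0 : Filter.Tendsto (fun k : ℕ => evNorm (y k - xs)) Filter.atTop (nhds 0) := by
    have hgeo' : Filter.Tendsto (fun k : ℕ => c ^ k * evNorm (y 0 - xs)) Filter.atTop (nhds 0) := by
      have := (tendsto_pow_atTop_nhds_zero_of_lt_one hc0 hc1).mul_const (evNorm (y 0 - xs))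
      simpa using this
    exact squeeze_zero (fun k => evNorm_nonneg _) hgeo hgeo'
  have htendE : Filter.Tendsto (fun k : ℕ => (WithLp.equiv 2 (Fin n → ℝ)).symm (y k))
      Filter.atTop (nhds ((WithLp.equiv 2 (Fin n → ℝ)).symm xs)) := by
    rw [tendsto_iff_norm_sub_tendsto_zero]
    convert htend0 using 2
    rfl
  have hcont : Continuous (WithLp.equiv 2 (Fin n → ℝ)) := PiLp.continuous_ofLp _ _
  have := (hcont.tendsto _).comp htendE
  exact this
end
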